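/- arXiv:1607.04182 — 4 statements merged into one kernel-verified Lean document; each statement's English description precedes it below -/
import Mathlib

section
/- Let X be a real Hilbert space, F : X → X Lipschitz with constant L, and x₁,…,x_N independent X-valued random variables with E[‖x_i‖²] ≤ C. Then with m = (1/N)∑ x_i, for each i, |E[⟨F(m), x_i⟩] − ⟨F(E m), E x_i⟩| ≤ 2LC/N + √C · L·√(C/N). -/
/-!
Since `F` is `L`-Lipschitz, `⟪F m, xᵢ⟫ - ⟪F (E m), xᵢ⟫` is bounded pointwise by
`L ‖m - E m‖ ‖xᵢ‖`. By Cauchy–Schwarz its expectation is at most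
`L √(E ‖m - E m‖²) √(E ‖xᵢ‖²)`, and for pairwise independent summands the cross terms of
`E ‖m - E m‖²` vanish, so `E ‖m - E m‖² ≤ C / N`. Together these already bound the difference by
`L √(C / N) √C`.
-/

open MeasureTheory ProbabilityTheory
open scoped RealInnerProductSpace

section

variable {Ω E : Type*} [MeasurableSpace Ω] {μ : Measure Ω}

lemma integral_norm_mul_norm_le_sqrt {G : Type*} [NormedAddCommGroup E] [NormedAddCommGroup G]
    {f : Ω → E} {g : Ω → G} (hf : MemLp f 2 μ) (hg : MemLp g 2 μ) :
    ∫ ω, ‖f ω‖ * ‖g ω‖ ∂μ ≤ √(∫ ω, ‖f ω‖ ^ 2 ∂μ) * √(∫ ω, ‖g ω‖ ^ 2 ∂μ) := by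
  have h := integral_mul_le_Lp_mul_Lq_of_nonneg Real.HolderConjugate.two_two
    (.of_forall fun ω => norm_nonneg (f ω)) (.of_forall fun ω => norm_nonneg (g ω))
    (by simpa using hf.norm) (by simpa using hg.norm)
  simpa only [Real.rpow_two, Real.sqrt_eq_rpow, one_div] using h

variable [NormedAddCommGroup E] [InnerProductSpace ℝ E]

lemma MeasureTheory.MemLp.integrable_inner {f g : Ω → E} (hf : MemLp f 2 μ)
    (hg : MemLp g 2 μ) : Integrable (fun ω => ⟪f ω, g ω⟫) μ := by
  refine (hf.norm.integrable_mul hg.norm).mono' (hf.1.inner hg.1) (.of_forall fun ω => ?_)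
  simpa using abs_real_inner_le_norm (f ω) (g ω)

variable [CompleteSpace E]

lemma integral_norm_sub_integral_sq [IsProbabilityMeasure μ] {f : Ω → E} (hf : MemLp f 2 μ) :
    ∫ ω, ‖f ω - μ[f]‖ ^ 2 ∂μ = ∫ ω, ‖f ω‖ ^ 2 ∂μ - ‖μ[f]‖ ^ 2 := by
  have hf1 : Integrable f μ := hf.integrable one_le_two
  have hf2 : Integrable (fun ω => ‖f ω‖ ^ 2) μ := hf.integrable_norm_pow two_ne_zero
  have hinner : Integrable (fun ω => 2 * ⟪μ[f], f ω⟫) μ := (hf1.const_inner _).const_mul 2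
  have hsub : Integrable (fun ω => ‖μ[f]‖ ^ 2 - 2 * ⟪μ[f], f ω⟫) μ :=
    (integrable_const _).sub hinner
  simp_rw [norm_sub_rev _ μ[f], norm_sub_sq_real]
  rw [integral_add hsub hf2, integral_sub (integrable_const _) hinner, integral_const_mul,
    integral_const, probReal_univ, one_smul, integral_inner hf1, real_inner_self_eq_norm_sq]
  ring

lemma integral_norm_sub_integral_sq_le [IsProbabilityMeasure μ] {f : Ω → E} (hf : MemLp f 2 μ) :
    ∫ ω, ‖f ω - μ[f]‖ ^ 2 ∂μ ≤ ∫ ω, ‖f ω‖ ^ 2 ∂μ := by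
  rw [integral_norm_sub_integral_sq hf]
  linarith [sq_nonneg ‖μ[f]‖]

variable [MeasurableSpace E] [BorelSpace E]

lemma ProbabilityTheory.IndepFun.integral_inner {f g : Ω → E} (h : IndepFun f g μ)
    (hf : Integrable f μ) (hg : Integrable g μ) : ∫ ω, ⟪f ω, g ω⟫ ∂μ = ⟪μ[f], μ[g]⟫ :=
  h.integral_bilin hf hg (innerSL ℝ)

lemma integral_norm_sum_sq_of_pairwise_indepFun [IsFiniteMeasure μ] {ι : Type*} (s : Finset ι)
    {f : ι → Ω → E} (hindep : Pairwise fun i j => IndepFun (f i) (f j) μ)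
    (hf : ∀ i, MemLp (f i) 2 μ) (hmean : ∀ i, μ[f i] = 0) :
    ∫ ω, ‖∑ i ∈ s, f i ω‖ ^ 2 ∂μ = ∑ i ∈ s, ∫ ω, ‖f i ω‖ ^ 2 ∂μ := by
  have horth : ∀ i j, i ≠ j → ∫ ω, ⟪f i ω, f j ω⟫ ∂μ = 0 := fun i j hij => by
    rw [(hindep hij).integral_inner ((hf i).integrable one_le_two)
      ((hf j).integrable one_le_two), hmean i, inner_zero_left]
  simp_rw [← real_inner_self_eq_norm_sq, sum_inner, inner_sum]
  rw [integral_finsetSum _ fun i _ => integrable_finsetSum _ fun j _ =>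
    (hf i).integrable_inner (hf j)]
  refine Finset.sum_congr rfl fun i hi => ?_
  rw [integral_finsetSum _ fun j _ => (hf i).integrable_inner (hf j),
    Finset.sum_eq_single_of_mem i hi fun j _ hji => horth i j hji.symm]

lemma integral_norm_sub_integral_sq_avg_le [IsProbabilityMeasure μ] {ι : Type*} [Fintype ι]
    {x : ι → Ω → E} {C : ℝ} (hindep : Pairwise fun i j => IndepFun (x i) (x j) μ)
    (hx : ∀ i, MemLp (x i) 2 μ) (hC : ∀ i, ∫ ω, ‖x i ω‖ ^ 2 ∂μ ≤ C) :
    ∫ ω, ‖(Fintype.card ι : ℝ)⁻¹ • ∑ j, x j ω -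
        ∫ ω', (Fintype.card ι : ℝ)⁻¹ • ∑ j, x j ω' ∂μ‖ ^ 2 ∂μ ≤ C / Fintype.card ι := by
  set n : ℝ := (Fintype.card ι : ℝ) with hn
  set y : ι → Ω → E := fun j ω => x j ω - μ[x j]
  have hy : ∀ j, MemLp (y j) 2 μ := fun j => (hx j).sub (memLp_const _)
  have hy_indep : Pairwise fun i j => IndepFun (y i) (y j) μ := fun i j hij =>
    (hindep hij).comp (measurable_id.sub_const _) (measurable_id.sub_const _)
  have hy_mean : ∀ j, μ[y j] = 0 := fun j => by
    simp [y, integral_sub ((hx j).integrable one_le_two) (integrable_const _)]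
  have hcenter : ∀ ω, n⁻¹ • ∑ j, x j ω - ∫ ω', n⁻¹ • ∑ j, x j ω' ∂μ = n⁻¹ • ∑ j, y j ω := by
    intro ω
    rw [integral_smul, integral_finsetSum _ fun j _ => (hx j).integrable one_le_two, ← smul_sub,
      ← Finset.sum_sub_distrib]
  calc ∫ ω, ‖n⁻¹ • ∑ j, x j ω - ∫ ω', n⁻¹ • ∑ j, x j ω' ∂μ‖ ^ 2 ∂μ
      = n⁻¹ ^ 2 * ∑ j, ∫ ω, ‖y j ω‖ ^ 2 ∂μ := by
        simp_rw [hcenter, norm_smul, mul_pow, Real.norm_of_nonneg (by positivity : 0 ≤ n⁻¹)]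
        rw [integral_const_mul, integral_norm_sum_sq_of_pairwise_indepFun _ hy_indep hy hy_mean]
    _ ≤ n⁻¹ ^ 2 * ∑ _j : ι, C := by
        gcongr with j
        exact (integral_norm_sub_integral_sq_le (hx j)).trans (hC j)
    _ = C / n := by
        rw [Finset.sum_const, Finset.card_univ, nsmul_eq_mul, ← hn]
        obtain h | h := eq_or_ne n 0
        · simp [h]
        · field_simp

end

section

variable {Ω V H : Type*} [MeasurableSpace Ω] {μ : Measure Ω} [IsFiniteMeasure μ]
  [NormedAddCommGroup V] [NormedSpace ℝ V]
  [NormedAddCommGroup H] [InnerProductSpace ℝ H] [CompleteSpace H]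

lemma abs_integral_inner_comp_sub_inner_comp_integral_le {F : V → H} {L : ℝ} (hL : 0 ≤ L)
    (hF : ∀ a b, ‖F a - F b‖ ≤ L * ‖a - b‖) {Y : Ω → V} {Z : Ω → H} (hY : MemLp Y 2 μ)
    (hZ : MemLp Z 2 μ) (hFYZ : Integrable (fun ω => ⟪F (Y ω), Z ω⟫) μ) :
    |∫ ω, ⟪F (Y ω), Z ω⟫ ∂μ - ⟪F μ[Y], μ[Z]⟫| ≤
      L * (√(∫ ω, ‖Y ω - μ[Y]‖ ^ 2 ∂μ) * √(∫ ω, ‖Z ω‖ ^ 2 ∂μ)) := by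
  have hZ1 : Integrable Z μ := hZ.integrable one_le_two
  have hYc : MemLp (fun ω => Y ω - μ[Y]) 2 μ := hY.sub (memLp_const _)
  have hbound : Integrable (fun ω => L * (‖Y ω - μ[Y]‖ * ‖Z ω‖)) μ :=
    (hYc.norm.integrable_mul hZ.norm).const_mul L
  calc |∫ ω, ⟪F (Y ω), Z ω⟫ ∂μ - ⟪F μ[Y], μ[Z]⟫|
      = ‖∫ ω, ⟪F (Y ω) - F μ[Y], Z ω⟫ ∂μ‖ := by
        simp_rw [inner_sub_left]
        rw [integral_sub hFYZ (hZ1.const_inner _), integral_inner hZ1, Real.norm_eq_abs]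
    _ ≤ ∫ ω, L * (‖Y ω - μ[Y]‖ * ‖Z ω‖) ∂μ := by
        refine norm_integral_le_of_norm_le hbound (.of_forall fun ω => ?_)
        rw [Real.norm_eq_abs, ← mul_assoc]
        exact (abs_real_inner_le_norm _ _).trans
          (mul_le_mul_of_nonneg_right (hF _ _) (norm_nonneg _))
    _ ≤ L * (√(∫ ω, ‖Y ω - μ[Y]‖ ^ 2 ∂μ) * √(∫ ω, ‖Z ω‖ ^ 2 ∂μ)) := by
        rw [integral_const_mul]
        exact mul_le_mul_of_nonneg_left (integral_norm_mul_norm_le_sqrt hYc hZ) hL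

end

theorem stmt5_general {Ω : Type*} [MeasurableSpace Ω] {μ : Measure Ω} [IsProbabilityMeasure μ]
    {X : Type*} [NormedAddCommGroup X] [InnerProductSpace ℝ X] [CompleteSpace X]
    [MeasurableSpace X] [BorelSpace X]
    {N : ℕ} {F : X → X} {L C : ℝ} (hL : 0 ≤ L) (hC : 0 ≤ C)
    (hF : ∀ a b : X, ‖F a - F b‖ ≤ L * ‖a - b‖)
    {x : Fin N → Ω → X}
    (hindep : Pairwise fun i j => IndepFun (x i) (x j) μ)
    (hint : ∀ i, Integrable (x i) μ)
    (hsq : ∀ i, Integrable (fun ω => ‖x i ω‖ ^ 2) μ)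
    (hx2 : ∀ i, ∫ ω, ‖x i ω‖ ^ 2 ∂μ ≤ C)
    (hintF : ∀ i, Integrable (fun ω => ⟪F ((N : ℝ)⁻¹ • ∑ j, x j ω), x i ω⟫) μ)
    (i : Fin N) :
    |(∫ ω, ⟪F ((N : ℝ)⁻¹ • ∑ j, x j ω), x i ω⟫ ∂μ) -
      ⟪F (∫ ω, (N : ℝ)⁻¹ • ∑ j, x j ω ∂μ), ∫ ω, x i ω ∂μ⟫| ≤
      2 * L * C / N + Real.sqrt C * (L * Real.sqrt (C / N)) := by
  have hx : ∀ j, MemLp (x j) 2 μ := fun j =>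
    (memLp_two_iff_integrable_sq_norm (hint j).1).2 (hsq j)
  have hm : MemLp (fun ω => (N : ℝ)⁻¹ • ∑ j, x j ω) 2 μ :=
    (memLp_finsetSum Finset.univ fun j _ => hx j).const_smul (N : ℝ)⁻¹
  have hvar := integral_norm_sub_integral_sq_avg_le hindep hx hx2
  rw [Fintype.card_fin] at hvar
  calc _ ≤ L * (√(∫ ω, ‖(N : ℝ)⁻¹ • ∑ j, x j ω - ∫ ω', (N : ℝ)⁻¹ • ∑ j, x j ω' ∂μ‖ ^ 2 ∂μ) *
          √(∫ ω, ‖x i ω‖ ^ 2 ∂μ)) :=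
        abs_integral_inner_comp_sub_inner_comp_integral_le hL hF hm (hx i) (hintF i)
    _ ≤ L * (√(C / N) * √C) := by gcongr; exact hx2 i
    _ ≤ 2 * L * C / N + √C * (L * √(C / N)) := by
        have : 0 ≤ 2 * L * C / N := by positivity
        linarith [mul_comm (√(C / N)) (√C)]

theorem stmt5 {Ω : Type*} [MeasurableSpace Ω] {μ : Measure Ω} [IsProbabilityMeasure μ]
    {X : Type*} [NormedAddCommGroup X] [InnerProductSpace ℝ X] [CompleteSpace X]
    [MeasurableSpace X] [BorelSpace X]
    {N : ℕ} (hN : 0 < N) {F : X → X} {L C : ℝ} (hL : 0 ≤ L) (hC : 0 ≤ C)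
    (hF : ∀ a b : X, ‖F a - F b‖ ≤ L * ‖a - b‖)
    {x : Fin N → Ω → X}
    (hindep : Pairwise fun i j => IndepFun (x i) (x j) μ)
    (hint : ∀ i, Integrable (x i) μ)
    (hsq : ∀ i, Integrable (fun ω => ‖x i ω‖ ^ 2) μ)
    (hx2 : ∀ i, ∫ ω, ‖x i ω‖ ^ 2 ∂μ ≤ C)
    (hFm : Integrable (fun ω => F ((N : ℝ)⁻¹ • ∑ j, x j ω)) μ)
    (hintF : ∀ i, Integrable (fun ω => ⟪F ((N : ℝ)⁻¹ • ∑ j, x j ω), x i ω⟫) μ)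
    (hintF' : ∀ i, Integrable
      (fun ω => ⟪F ((N : ℝ)⁻¹ • ∑ j ∈ Finset.univ.erase i, x j ω), x i ω⟫) μ)
    (i : Fin N) :
    |(∫ ω, ⟪F ((N : ℝ)⁻¹ • ∑ j, x j ω), x i ω⟫ ∂μ) -
      ⟪F (∫ ω, (N : ℝ)⁻¹ • ∑ j, x j ω ∂μ), ∫ ω, x i ω ∂μ⟫| ≤
      2 * L * C / N + Real.sqrt C * (L * Real.sqrt (C / N)) :=
  stmt5_general hL hC hF hindep hint hsq hx2 hintF i
end

section
/- (Finite-population deterministic version of the ε-Nash theorem.) Let X be a real Hilbert space, F : X → X be L-Lipschitz, and for each i = 1,…,N let J_i : X^N → ℝ be given by J_i(x) = V_i(x_i) + ⟨F(m), x_i⟩ where m = (1/N)∑_j x_j, V_i : X → ℝ arbitrary, and each x_i ranges over a set K_i ⊆ X with ‖x‖ ≤ √C for all x ∈ K_i. Suppose x* = (x₁*,…,x_N*) ∈ K₁×⋯×K_N and y* ∈ X satisfy: (a) y* = F(m*) with m* = (1/N)∑ x_i*, and (b) for each i, x_i* minimizes x ↦ V_i(x) + ⟨y*, x⟩ over K_i.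 Then x* is an ε_N-Nash equilibrium with ε_N = 4LC/N: for all i and all x_i ∈ K_i, J_i(x_i*, x_{-i}*) ≤ J_i(x_i, x_{-i}*) + 4LC/N. -/
open scoped RealInnerProductSpace BigOperators

theorem stmt10 {X : Type*} [NormedAddCommGroup X] [InnerProductSpace ℝ X] [CompleteSpace X]
    {N : ℕ} (hN : 0 < N) {L C : ℝ} (hL : 0 ≤ L) (hC : 0 ≤ C)
    {F : X → X} (hF : ∀ a b : X, ‖F a - F b‖ ≤ L * ‖a - b‖)
    {V : Fin N → X → ℝ} {K : Fin N → Set X}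
    (hK : ∀ i, ∀ x ∈ K i, ‖x‖ ≤ Real.sqrt C)
    {xs : Fin N → X} (hxs : ∀ i, xs i ∈ K i)
    {y : X} (hy : y = F ((N : ℝ)⁻¹ • ∑ j, xs j))
    (hbr : ∀ i, ∀ x ∈ K i, V i (xs i) + ⟪y, xs i⟫ ≤ V i x + ⟪y, x⟫) :
    ∀ i, ∀ x ∈ K i,
      V i (xs i) + ⟪F ((N : ℝ)⁻¹ • ∑ j, xs j), xs i⟫ ≤
        V i x + ⟪F ((N : ℝ)⁻¹ • (x + ∑ j ∈ Finset.univ.erase i, xs j)), x⟫ +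
          4 * L * C / N := by
  intro i x hx
  have hNpos : (0:ℝ) < N := by exact_mod_cast hN
  set m : X := (N : ℝ)⁻¹ • ∑ j, xs j with hm
  set m' : X := (N : ℝ)⁻¹ • (x + ∑ j ∈ Finset.univ.erase i, xs j) with hm'
  have hsum : (∑ j, xs j) = xs i + ∑ j ∈ Finset.univ.erase i, xs j := by
    rw [← Finset.add_sum_erase _ _ (Finset.mem_univ i)]
  have hmm : m - m' = (N : ℝ)⁻¹ • (xs i - x) := by
    rw [hm, hm', hsum, ← smul_sub]
    congr 1
    abel
  have hnorm : ‖m - m'‖ ≤ (2 * Real.sqrt C) / N := by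
    rw [hmm, norm_smul]
    have h1 : ‖xs i - x‖ ≤ 2 * Real.sqrt C := by
      calc ‖xs i - x‖ ≤ ‖xs i‖ + ‖x‖ := norm_sub_le _ _
        _ ≤ Real.sqrt C + Real.sqrt C := add_le_add (hK i _ (hxs i)) (hK i x hx)
        _ = 2 * Real.sqrt C := by ring
    have : ‖((N:ℝ)⁻¹)‖ = (N:ℝ)⁻¹ := by
      rw [Real.norm_eq_abs, abs_of_nonneg (by positivity)]
    rw [this, div_eq_inv_mul]
    exact mul_le_mul_of_nonneg_left h1 (by positivity)
  have hkey : ⟪y, x⟫ ≤ ⟪F m', x⟫ + 2 * L * C / N := by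
    have h1 : ⟪y - F m', x⟫ ≤ ‖y - F m'‖ * ‖x‖ := real_inner_le_norm _ _
    have h2 : ‖y - F m'‖ ≤ L * ((2 * Real.sqrt C) / N) := by
      rw [hy]
      calc ‖F m - F m'‖ ≤ L * ‖m - m'‖ := hF _ _
        _ ≤ L * ((2 * Real.sqrt C) / N) := mul_le_mul_of_nonneg_left hnorm hL
    have h3 : ‖y - F m'‖ * ‖x‖ ≤ L * ((2 * Real.sqrt C) / N) * Real.sqrt C :=
      mul_le_mul h2 (hK i x hx) (norm_nonneg _) (by positivity)
    have h4 : L * ((2 * Real.sqrt C) / N) * Real.sqrt C = 2 * L * C / N := by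
      rw [show L * ((2 * Real.sqrt C) / N) * Real.sqrt C
          = 2 * L * (Real.sqrt C * Real.sqrt C) / N by ring, Real.mul_self_sqrt hC]
    have := inner_sub_left (𝕜 := ℝ) y (F m') x
    have h5 : ⟪y, x⟫ - ⟪F m', x⟫ ≤ 2 * L * C / N := by
      rw [← this]; calc ⟪y - F m', x⟫ ≤ ‖y - F m'‖ * ‖x‖ := h1
        _ ≤ 2 * L * C / N := h4 ▸ h3
    linarith
  have hbr' := hbr i x hx
  have hle : 2 * L * C / N ≤ 4 * L * C / N := by
    gcongr
    nlinarith
  rw [← hy]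
  linarith
end

section
/- (Equilibrium implies social optimality, deterministic finite-dimensional version.) Let X be a real Hilbert space, V_i : X → ℝ convex for i = 1,…,N, K_i ⊆ X nonempty convex sets, φ : X → ℝ convex Fréchet differentiable, and F : X → X with F(z) = (1/N)φ'(z) for all z. Suppose (x₁*,…,x_N*) ∈ K₁×⋯×K_N and y* ∈ X satisfy: y* = F(m*) with m* = (1/N)∑ x_i*, and each x_i* minimizes x ↦ V_i(x) + ⟨y*, x⟩ over K_i. Then (x₁*,…,x_N*) minimizes ∑_{i=1}^N V_i(x_i) + φ((1/N)∑ x_i) over K₁×⋯×K_N. -/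
open scoped RealInnerProductSpace BigOperators

/-!
Convexity of `φ` puts `φ` above its tangent plane at the equilibrium mean `m*`, and the slope of
that plane in the direction of a profile `z` is `∑ ⟪y*, zᵢ - xᵢ*⟫`, since `y* = N⁻¹ • φ' m*`.
Each of these terms is bounded below by `Vᵢ(xᵢ*) - Vᵢ(zᵢ)` by the best-response property, and
summing gives the claim.
-/

theorem ConvexOn.add_fderiv_sub_le {E : Type*} [NormedAddCommGroup E] [NormedSpace ℝ E]
    {s : Set E} {f : E → ℝ} {f' : E →L[ℝ] ℝ} {x y : E}
    (hf : ConvexOn ℝ s f) (hx : x ∈ s) (hy : y ∈ s) (hf' : HasFDerivAt f f' x) :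
    f x + f' (y - x) ≤ f y := by
  set L : ℝ →ᵃ[ℝ] E := AffineMap.lineMap x y
  have hconv : ConvexOn ℝ (L ⁻¹' s) (f ∘ L) := hf.comp_affineMap L
  have hderiv : HasDerivAt (f ∘ L) (f' (y - x)) 0 :=
    hf'.comp_hasDerivAt_of_eq 0 AffineMap.hasDerivAt_lineMap (by simp [L])
  have hslope := hconv.le_slope_of_hasDerivAt (by simpa [L] using hx) (by simpa [L] using hy)
    zero_lt_one hderiv
  simp only [slope_def_field, Function.comp_apply, L, AffineMap.lineMap_apply_zero,
    AffineMap.lineMap_apply_one, sub_zero, div_one] at hslope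
  linarith

theorem ConvexOn.add_inner_gradient_sub_le {E : Type*} [NormedAddCommGroup E]
    [InnerProductSpace ℝ E] [CompleteSpace E] {s : Set E} {f : E → ℝ} {f' x y : E}
    (hf : ConvexOn ℝ s f) (hx : x ∈ s) (hy : y ∈ s) (hf' : HasGradientAt f f' x) :
    f x + ⟪f', y - x⟫ ≤ f y := by
  simpa using hf.add_fderiv_sub_le hx hy (hasGradientAt_iff_hasFDerivAt.mp hf')

theorem stmt13_general {X : Type*} [NormedAddCommGroup X] [InnerProductSpace ℝ X] [CompleteSpace X]
    {N : ℕ}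
    {V : Fin N → X → ℝ}
    {K : Fin N → Set X}
    {φ : X → ℝ} (hφ : ConvexOn ℝ Set.univ φ) {φ' : X → X}
    (hgrad : ∀ z, HasGradientAt φ (φ' z) z)
    {F : X → X} (hFφ : ∀ z, F z = (N : ℝ)⁻¹ • φ' z)
    {xs : Fin N → X}
    {y : X} (hy : y = F ((N : ℝ)⁻¹ • ∑ j, xs j))
    (hbr : ∀ i, ∀ x ∈ K i, V i (xs i) + ⟪y, xs i⟫ ≤ V i x + ⟪y, x⟫) :
    ∀ z : Fin N → X, (∀ i, z i ∈ K i) →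
      (∑ i, V i (xs i)) + φ ((N : ℝ)⁻¹ • ∑ i, xs i) ≤
        (∑ i, V i (z i)) + φ ((N : ℝ)⁻¹ • ∑ i, z i) := by
  intro z hz
  set m : X := (N : ℝ)⁻¹ • ∑ i, xs i
  have htangent : φ m + ⟪φ' m, (N : ℝ)⁻¹ • ∑ i, z i - m⟫ ≤ φ ((N : ℝ)⁻¹ • ∑ i, z i) :=
    hφ.add_inner_gradient_sub_le trivial trivial (hgrad m)
  have hsplit : ⟪φ' m, (N : ℝ)⁻¹ • ∑ i, z i - m⟫ = ∑ i, ⟪y, z i - xs i⟫ := by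
    simp only [m, hy, hFφ, ← smul_sub, ← Finset.sum_sub_distrib, real_inner_smul_right,
      inner_sum, Finset.mul_sum, real_inner_smul_left]
  have hplayers : ∑ i, V i (xs i) ≤ ∑ i, V i (z i) + ∑ i, ⟪y, z i - xs i⟫ := by
    rw [← Finset.sum_add_distrib]
    refine Finset.sum_le_sum fun i _ => ?_
    have := hbr i (z i) (hz i)
    rw [inner_sub_right]
    linarith
  linarith

theorem stmt13 {X : Type*} [NormedAddCommGroup X] [InnerProductSpace ℝ X] [CompleteSpace X]
    {N : ℕ} (hN : 0 < N)
    {V : Fin N → X → ℝ} (hV : ∀ i, ConvexOn ℝ Set.univ (V i))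
    {K : Fin N → Set X} (hKne : ∀ i, (K i).Nonempty) (hKconv : ∀ i, Convex ℝ (K i))
    {φ : X → ℝ} (hφ : ConvexOn ℝ Set.univ φ) {φ' : X → X}
    (hgrad : ∀ z, HasGradientAt φ (φ' z) z)
    {F : X → X} (hFφ : ∀ z, F z = (N : ℝ)⁻¹ • φ' z)
    {xs : Fin N → X} (hxs : ∀ i, xs i ∈ K i)
    {y : X} (hy : y = F ((N : ℝ)⁻¹ • ∑ j, xs j))
    (hbr : ∀ i, ∀ x ∈ K i, V i (xs i) + ⟪y, xs i⟫ ≤ V i x + ⟪y, x⟫) :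
    ∀ z : Fin N → X, (∀ i, z i ∈ K i) →
      (∑ i, V i (xs i)) + φ ((N : ℝ)⁻¹ • ∑ i, xs i) ≤
        (∑ i, V i (z i)) + φ ((N : ℝ)⁻¹ • ∑ i, z i) :=
  stmt13_general hφ hgrad hFφ hy hbr
end

section
/- (Social optimality implies equilibrium under strict feasibility, deterministic version.) Under the setting of the previous statement (V_i convex, K_i convex, φ convex differentiable, F = (1/N)φ'), suppose additionally each V_i is continuous and each K_i has nonempty interior (Slater condition), and (x₁*,…,x_N*) minimizes ∑ V_i(x_i) + φ((1/N)∑ x_i) over K₁×⋯×K_N. Then with y* = F(m*) where m* = (1/N)∑ x_i*, each x_i* minimizes x ↦ V_i(x) + ⟨y*, x⟩ over K_i; i.e., the socially optimal solution is a mean field equilibrium. -/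
open scoped RealInnerProductSpace BigOperators

/-!
Move only agent `i` from `xs i` towards `x ∈ K i`, to `xs i + t • (x - xs i)` with `t ∈ [0, 1]`.
The profile stays feasible and the mean `m` of `xs` moves by `(t / N) • (x - xs i)`, while
convexity bounds the increase of `V i` by `t * (V i x - V i (xs i))`. Social optimality therefore
makes `t ↦ φ (m + (t / N) • (x - xs i)) + t * (V i x - V i (xs i))` minimal on `[0, 1]` at `t = 0`,
so its right derivative `⟪φ' m / N, x - xs i⟫ + V i x - V i (xs i)` at `0` is nonnegative.
-/

theorem Finset.sum_update_eq_add_sub {ι M : Type*} [Fintype ι] [DecidableEq ι] [AddCommGroup M]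
    (f : ι → M) (i : ι) (b : M) : ∑ j, Function.update f i b j = ∑ j, f j + (b - f i) := by
  rw [Finset.sum_update_of_mem (Finset.mem_univ i), ← Finset.erase_eq,
    Finset.sum_erase_eq_sub (Finset.mem_univ i)]
  abel

theorem ConvexOn.isMinOn_add_of_isMinOn_add_of_hasFDerivAt {E : Type*} [NormedAddCommGroup E]
    [NormedSpace ℝ E] {K : Set E} {V f : E → ℝ} {f' : E →L[ℝ] ℝ} {a : E}
    (hV : ConvexOn ℝ K V) (ha : a ∈ K) (hf : HasFDerivAt f f' a)
    (hmin : IsMinOn (fun x => V x + f x) K a) : IsMinOn (fun x => V x + f' x) K a := by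
  intro x hx
  set ψ : ℝ → ℝ := fun t => f (a + t • (x - a)) + t * (V x - V a)
  have hψmin : IsMinOn ψ (Set.Icc 0 1) 0 := by
    rintro t ⟨ht0, ht1⟩
    have hseg : a + t • (x - a) = (1 - t) • a + t • x := by
      rw [smul_sub, sub_smul, one_smul]; abel
    have hmem : a + t • (x - a) ∈ K := hseg ▸ hV.1 ha hx (by linarith) ht0 (by ring)
    have hVle : V (a + t • (x - a)) ≤ (1 - t) * V a + t * V x :=
      hseg ▸ hV.2 ha hx (by linarith) ht0 (by ring)
    have hcmp : V a + f a ≤ V (a + t • (x - a)) + f (a + t • (x - a)) := hmin hmem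
    show f (a + (0 : ℝ) • (x - a)) + 0 * (V x - V a) ≤ f (a + t • (x - a)) + t * (V x - V a)
    simp only [zero_smul, add_zero, zero_mul]
    nlinarith
  have hψ : HasDerivAt ψ (f' (x - a) + (V x - V a)) 0 := by
    have hline : HasDerivAt (fun t : ℝ => a + t • (x - a)) (x - a) 0 := by
      simpa using ((hasDerivAt_id (0 : ℝ)).smul_const (x - a)).const_add a
    have hf0 : HasFDerivAt f f' (a + (0 : ℝ) • (x - a)) := by simpa using hf
    exact (hf0.comp_hasDerivAt 0 hline).add (hasDerivAt_mul_const (V x - V a))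
  have hone : (1 : ℝ) ∈ posTangentConeAt (Set.Icc 0 1) 0 :=
    mem_posTangentConeAt_of_segment_subset (by simp [segment_eq_Icc])
  have hslope := hψmin.localize.hasFDerivWithinAt_nonneg hψ.hasFDerivAt.hasFDerivWithinAt hone
  rw [ContinuousLinearMap.toSpanSingleton_apply, one_smul, map_sub] at hslope
  show V a + f' a ≤ V x + f' x
  linarith

theorem isMinOn_unilateral_deviation {ι X : Type*} [Fintype ι] [DecidableEq ι] [AddCommGroup X]
    {V : ι → X → ℝ} {K : ι → Set X} {Φ : X → ℝ} {xs : ι → X} (hxs : ∀ j, xs j ∈ K j)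
    (hopt : ∀ z : ι → X, (∀ j, z j ∈ K j) →
      ∑ j, V j (xs j) + Φ (∑ j, xs j) ≤ ∑ j, V j (z j) + Φ (∑ j, z j)) (i : ι) :
    IsMinOn (fun y => V i y + Φ (∑ j, xs j + (y - xs i))) (K i) (xs i) := by
  intro y hy
  have hupd : Function.update xs i y ∈ Set.univ.pi K :=
    (Set.update_mem_pi_iff_of_mem fun j _ => hxs j).2 fun _ => hy
  have hcmp := hopt _ fun j => hupd j (Set.mem_univ j)
  rw [Finset.sum_update_eq_add_sub,
    Finset.sum_congr rfl fun j _ => Function.apply_update (fun j => V j) xs i y j,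
    Finset.sum_update_eq_add_sub] at hcmp
  show V i (xs i) + Φ (∑ j, xs j + (xs i - xs i)) ≤ V i y + Φ (∑ j, xs j + (y - xs i))
  rw [sub_self, add_zero]
  linarith

theorem stmt14_general {X : Type*} [NormedAddCommGroup X] [InnerProductSpace ℝ X] [CompleteSpace X]
    {N : ℕ}
    {V : Fin N → X → ℝ} (hV : ∀ i, ConvexOn ℝ Set.univ (V i))
    {K : Fin N → Set X} (hKconv : ∀ i, Convex ℝ (K i))
    {φ : X → ℝ} {φ' : X → X}
    (hgrad : ∀ z, HasGradientAt φ (φ' z) z)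
    {F : X → X} (hFφ : ∀ z, F z = (N : ℝ)⁻¹ • φ' z)
    {xs : Fin N → X} (hxs : ∀ i, xs i ∈ K i)
    (hsoc : ∀ z : Fin N → X, (∀ i, z i ∈ K i) →
      (∑ i, V i (xs i)) + φ ((N : ℝ)⁻¹ • ∑ i, xs i) ≤
        (∑ i, V i (z i)) + φ ((N : ℝ)⁻¹ • ∑ i, z i)) :
    ∀ i, ∀ x ∈ K i,
      V i (xs i) + ⟪F ((N : ℝ)⁻¹ • ∑ j, xs j), xs i⟫ ≤
        V i x + ⟪F ((N : ℝ)⁻¹ • ∑ j, xs j), x⟫ := by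
  intro i x hx
  have hdev := isMinOn_unilateral_deviation (Φ := fun s => φ ((N : ℝ)⁻¹ • s)) hxs hsoc i
  have hshift : HasFDerivAt (fun y => (N : ℝ)⁻¹ • (∑ j, xs j + (y - xs i)))
      ((N : ℝ)⁻¹ • ContinuousLinearMap.id ℝ X) (xs i) :=
    (((hasFDerivAt_id (xs i)).sub_const (xs i)).const_add _).const_smul _
  have hf := (hgrad _).hasFDerivAt.comp (xs i) hshift
  rw [sub_self, add_zero] at hf
  have hVi : ConvexOn ℝ (K i) (V i) := (hV i).subset (Set.subset_univ _) (hKconv i)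
  have hmin := hVi.isMinOn_add_of_isMinOn_add_of_hasFDerivAt (hxs i) hf hdev hx
  simpa [hFφ, real_inner_smul_left, real_inner_smul_right] using hmin

theorem stmt14 {X : Type*} [NormedAddCommGroup X] [InnerProductSpace ℝ X] [CompleteSpace X]
    {N : ℕ} (hN : 0 < N)
    {V : Fin N → X → ℝ} (hV : ∀ i, ConvexOn ℝ Set.univ (V i))
    (hVcont : ∀ i, Continuous (V i))
    {K : Fin N → Set X} (hKne : ∀ i, (K i).Nonempty) (hKconv : ∀ i, Convex ℝ (K i))
    (hKint : ∀ i, (interior (K i)).Nonempty)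
    {φ : X → ℝ} (hφ : ConvexOn ℝ Set.univ φ) {φ' : X → X}
    (hgrad : ∀ z, HasGradientAt φ (φ' z) z)
    {F : X → X} (hFφ : ∀ z, F z = (N : ℝ)⁻¹ • φ' z)
    {xs : Fin N → X} (hxs : ∀ i, xs i ∈ K i)
    (hsoc : ∀ z : Fin N → X, (∀ i, z i ∈ K i) →
      (∑ i, V i (xs i)) + φ ((N : ℝ)⁻¹ • ∑ i, xs i) ≤
        (∑ i, V i (z i)) + φ ((N : ℝ)⁻¹ • ∑ i, z i)) :
    ∀ i, ∀ x ∈ K i,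
      V i (xs i) + ⟪F ((N : ℝ)⁻¹ • ∑ j, xs j), xs i⟫ ≤
        V i x + ⟪F ((N : ℝ)⁻¹ • ∑ j, xs j), x⟫ :=
  stmt14_general hV hKconv hgrad hFφ hxs hsoc
end
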